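/- Consistency of very weak solutions with classical ones: sup_{t∈[0,T]} ‖u(t) − u_ε(t)‖_{L²(0,1)} → 0 as ε → 0. -/

import Mathlib

open MeasureTheory Set Filter
open scoped RealInnerProductSpace
open scoped ENNReal NNReal

noncomputable section

/-- The measure on the interval `(0,1)`. -/
abbrev mu01 : MeasureTheory.Measure ℝ := MeasureTheory.volume.restrict (Set.Ioo (0:ℝ) 1)

/-- The real Hilbert space `L²(0,1)`. -/
abbrev L2 := MeasureTheory.Lp ℝ 2 mu01

/-- `φ ∈ L²(0,1)` is a Dirichlet eigenfunction of `−d²/dx² + q` with eigenvalue `lam`: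
it has a representative `Φ` which together with its derivative `Φd` is absolutely
continuous on `[0,1]` (encoded via the integral representations with integrable
derivatives), has second derivative `Φdd ∈ L²(0,1)`, satisfies `Φ(0) = Φ(1) = 0`, and
solves `−Φ″ + qΦ = lam Φ` a.e. on `(0,1)`. -/
def IsDirichletEigenfunction (q : ℝ → ℝ) (lam : ℝ) (φ : L2) : Prop :=
  ∃ Φ Φd Φdd : ℝ → ℝ,
    (∀ᵐ x ∂mu01, (φ : ℝ → ℝ) x = Φ x) ∧
    IntervalIntegrable Φd volume 0 1 ∧
    IntervalIntegrable Φdd volume 0 1 ∧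
    (∀ x ∈ Icc (0:ℝ) 1, Φ x = Φ 0 + ∫ s in (0:ℝ)..x, Φd s) ∧
    (∀ x ∈ Icc (0:ℝ) 1, Φd x = Φd 0 + ∫ s in (0:ℝ)..x, Φdd s) ∧
    MemLp Φdd 2 mu01 ∧
    Φ 0 = 0 ∧ Φ 1 = 0 ∧
    (∀ᵐ x ∂mu01, -Φdd x + q x * Φ x = lam * Φ x)

/-- `w ∈ L²(0,1)` has a representative `V` which together with its derivative `Vd` is
absolutely continuous on `[0,1]`, with second derivative `Vdd ∈ L²(0,1)`, and
`V(0) = V(1) = 0`. -/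
def IsH2DirichletWith (w : L2) (V Vd Vdd : ℝ → ℝ) : Prop :=
  (∀ᵐ x ∂mu01, (w : ℝ → ℝ) x = V x) ∧
  IntervalIntegrable Vd volume 0 1 ∧
  IntervalIntegrable Vdd volume 0 1 ∧
  (∀ x ∈ Icc (0:ℝ) 1, V x = V 0 + ∫ s in (0:ℝ)..x, Vd s) ∧
  (∀ x ∈ Icc (0:ℝ) 1, Vd x = Vd 0 + ∫ s in (0:ℝ)..x, Vdd s) ∧
  MemLp Vdd 2 mu01 ∧
  V 0 = 0 ∧ V 1 = 0

lemma exp_sub_exp_abs {x y : ℝ} (hx : 0 ≤ x) (hy : 0 ≤ y) :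
    |Real.exp (-x) - Real.exp (-y)| ≤ |x - y| := by
  wlog hxy : x ≤ y generalizing x y
  · rw [abs_sub_comm, abs_sub_comm x y]; exact this hy hx (le_of_not_ge hxy)
  rw [abs_of_nonneg (by simpa using Real.exp_le_exp.2 (by linarith)),
    abs_of_nonpos (by linarith)]
  have h1 : 1 - Real.exp (-(y - x)) ≤ y - x := by
    nlinarith [Real.add_one_le_exp (-(y - x))]
  have h2 : Real.exp (-x) ≤ 1 := Real.exp_le_one_iff.2 (by linarith)
  have : Real.exp (-x) - Real.exp (-y) = Real.exp (-x) * (1 - Real.exp (-(y - x))) := by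
    rw [mul_sub, mul_one, ← Real.exp_add]; ring_nf
  nlinarith [Real.exp_pos (-x), Real.exp_pos (-y)]

lemma exp_sub_exp_scaled {μ c x y : ℝ} (hμ : 0 ≤ μ) (hc : 0 ≤ c) (hx : c ≤ x) (hy : c ≤ y) :
    |Real.exp (-(μ * x)) - Real.exp (-(μ * y))| ≤ μ * Real.exp (-(μ * c)) * |x - y| := by
  wlog hxy : x ≤ y generalizing x y
  · rw [abs_sub_comm, abs_sub_comm x y]; exact this hy hx (le_of_not_ge hxy)
  have hxx : Real.exp (-(μ * x)) ≤ Real.exp (-(μ * c)) :=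
    Real.exp_le_exp.2 (by nlinarith)
  rw [abs_of_nonneg (by simpa using Real.exp_le_exp.2 (by nlinarith)),
    abs_of_nonpos (by linarith)]
  have h1 : 1 - Real.exp (-(μ * (y - x))) ≤ μ * (y - x) := by
    nlinarith [Real.add_one_le_exp (-(μ * (y - x)))]
  have heq : Real.exp (-(μ * x)) - Real.exp (-(μ * y)) =
      Real.exp (-(μ * x)) * (1 - Real.exp (-(μ * (y - x)))) := by
    rw [mul_sub, mul_one, ← Real.exp_add]; ring_nf
  rw [heq]
  have h0 : 0 ≤ 1 - Real.exp (-(μ * (y - x))) := by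
    have : Real.exp (-(μ * (y - x))) ≤ 1 := Real.exp_le_one_iff.2 (by nlinarith)
    linarith
  calc Real.exp (-(μ * x)) * (1 - Real.exp (-(μ * (y - x))))
      ≤ Real.exp (-(μ * c)) * (μ * (y - x)) := by
        apply mul_le_mul hxx h1 h0 (Real.exp_pos _).le
    _ = μ * Real.exp (-(μ * c)) * -(x - y) := by ring

lemma self_mul_exp_neg_le_one {s : ℝ} (hs : 0 ≤ s) : s * Real.exp (-s) ≤ 1 := by
  rw [Real.exp_neg, ← div_eq_mul_inv, div_le_one (Real.exp_pos s)]
  linarith [Real.add_one_le_exp s]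

lemma two_toReal_pos : (0:ℝ) < (2 : ℝ≥0∞).toReal := by norm_num

lemma memℓp_two_of_le {f g : ℕ → ℝ} (hg : Memℓp g 2) (h : ∀ n, |f n| ≤ |g n|) :
    Memℓp f 2 := by
  apply memℓp_gen
  have hs := hg.summable two_toReal_pos
  refine Summable.of_nonneg_of_le (fun n => Real.rpow_nonneg (norm_nonneg _) _)
    (fun n => ?_) hs
  exact Real.rpow_le_rpow (norm_nonneg _) (by simpa [Real.norm_eq_abs] using h n)
    (by norm_num)

lemma lp_norm_mono {f g : lp (fun _ : ℕ => ℝ) 2} (h : ∀ n, |f n| ≤ |g n|) : ‖f‖ ≤ ‖g‖ := by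
  rw [lp.norm_eq_tsum_rpow two_toReal_pos f, lp.norm_eq_tsum_rpow two_toReal_pos g]
  refine Real.rpow_le_rpow (tsum_nonneg (fun n => Real.rpow_nonneg (norm_nonneg _) _))
    (Summable.tsum_le_tsum (fun n => ?_) ((lp.memℓp f).summable two_toReal_pos)
      ((lp.memℓp g).summable two_toReal_pos)) (by norm_num)
  exact Real.rpow_le_rpow (norm_nonneg _) (by simpa [Real.norm_eq_abs] using h n) (by norm_num)

lemma memℓp_two_of_le_mul {f g : ℕ → ℝ} {C : ℝ} (hg : Memℓp g 2)
    (h : ∀ n, |f n| ≤ C * |g n|) : Memℓp f 2 := by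
  refine memℓp_two_of_le (hg.const_mul C) (fun n => (h n).trans ?_)
  rw [abs_mul]
  exact mul_le_mul_of_nonneg_right (le_abs_self C) (abs_nonneg _)

variable {E : Type*} [NormedAddCommGroup E] [InnerProductSpace ℝ E] [CompleteSpace E]

private lemma multL_mem (β : HilbertBasis ℕ ℝ E) (σ : ℕ → ℝ) (C : ℝ)
    (hσ : ∀ n, |σ n| ≤ C) (x : E) : Memℓp (fun n => σ n * β.repr x n) 2 := by
  refine memℓp_two_of_le_mul (C := C) (lp.memℓp (β.repr x)) (fun n => ?_)
  rw [abs_mul]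
  exact mul_le_mul_of_nonneg_right (hσ n) (abs_nonneg _)

/-- The diagonal multiplier operator in a Hilbert basis. -/
def multL (β : HilbertBasis ℕ ℝ E) (σ : ℕ → ℝ) (C : ℝ) (hσ : ∀ n, |σ n| ≤ C) :
    E →ₗ[ℝ] E where
  toFun x := β.repr.symm ⟨fun n => σ n * β.repr x n, multL_mem β σ C hσ x⟩
  map_add' x y := by
    apply β.repr.injective
    rw [map_add β.repr (β.repr.symm _) (β.repr.symm _), LinearIsometryEquiv.apply_symm_apply, LinearIsometryEquiv.apply_symm_apply,
      LinearIsometryEquiv.apply_symm_apply]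
    apply lp.ext
    funext n
    simp [lp.coeFn_add, map_add, mul_add]
    rfl
  map_smul' c x := by
    apply β.repr.injective
    apply lp.ext
    funext n
    dsimp only
    rw [RingHom.id_apply, LinearIsometryEquiv.apply_symm_apply]
    conv_rhs => rw [_root_.map_smul β.repr, LinearIsometryEquiv.apply_symm_apply, lp.coeFn_smul]
    rw [Pi.smul_apply, smul_eq_mul]
    have h : (⇑(β.repr (c • x)) : ℕ → ℝ) n = c * β.repr x n := by
      rw [_root_.map_smul β.repr, lp.coeFn_smul, Pi.smul_apply, smul_eq_mul]
    show σ n * (β.repr (c • x)) n = c * (σ n * β.repr x n)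
    rw [h]
    ring

lemma multL_repr (β : HilbertBasis ℕ ℝ E) (σ : ℕ → ℝ) (C : ℝ) (hσ : ∀ n, |σ n| ≤ C)
    (x : E) (n : ℕ) : β.repr (multL β σ C hσ x) n = σ n * β.repr x n := by
  simp only [multL, LinearMap.coe_mk, AddHom.coe_mk, LinearIsometryEquiv.apply_symm_apply]

lemma multL_norm (β : HilbertBasis ℕ ℝ E) (σ : ℕ → ℝ) (C : ℝ) (hσ : ∀ n, |σ n| ≤ C)
    (hC : 0 ≤ C) (x : E) : ‖multL β σ C hσ x‖ ≤ C * ‖x‖ := by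
  have h1 : ‖multL β σ C hσ x‖ = ‖β.repr (multL β σ C hσ x)‖ := (β.repr.norm_map _).symm
  rw [h1]
  have h2 : ‖β.repr (multL β σ C hσ x)‖ ≤ ‖C • β.repr x‖ := by
    apply lp_norm_mono
    intro n
    rw [multL_repr, lp.coeFn_smul, Pi.smul_apply, smul_eq_mul, abs_mul, abs_mul,
      abs_of_nonneg hC]
    exact mul_le_mul_of_nonneg_right (hσ n) (abs_nonneg _)
  refine h2.trans ?_
  rw [norm_smul, Real.norm_eq_abs, abs_of_nonneg hC, β.repr.norm_map]

lemma multL_tsum (β : HilbertBasis ℕ ℝ E) (σ : ℕ → ℝ) (C : ℝ) (hσ : ∀ n, |σ n| ≤ C)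
    (x : E) : (∑' n, (σ n * ⟪x, β n⟫) • β n) = multL β σ C hσ x := by
  have h : HasSum (fun n => (σ n * β.repr x n) • β n) (multL β σ C hσ x) := by
    have := β.hasSum_repr_symm (⟨fun n => σ n * β.repr x n, multL_mem β σ C hσ x⟩ :
      lp (fun _ : ℕ => ℝ) 2)
    exact this
  have h2 : (fun n => (σ n * ⟪x, β n⟫) • β n) = fun n => (σ n * β.repr x n) • β n := by
    funext n
    rw [β.repr_apply_apply, real_inner_comm]
  rw [h2]
  exact h.tsum_eq

lemma multL_basis (β : HilbertBasis ℕ ℝ E) (σ : ℕ → ℝ) (C : ℝ) (hσ : ∀ n, |σ n| ≤ C)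
    (i : ℕ) : multL β σ C hσ (β i) = σ i • β i := by
  classical
  apply β.repr.injective
  apply lp.ext
  funext n
  rw [_root_.map_smul]
  simp only [lp.coeFn_smul, Pi.smul_apply, smul_eq_mul]
  rw [multL_repr, β.repr_self]
  rcases eq_or_ne n i with rfl | hn
  · simp [lp.single_apply]
  · simp [lp.single_apply, hn]



lemma cont_of_rep {F Fd : ℝ → ℝ} (hFd : IntervalIntegrable Fd volume 0 1)
    (hF : ∀ x ∈ Icc (0:ℝ) 1, F x = F 0 + ∫ s in (0:ℝ)..x, Fd s) :
    ContinuousOn F (Icc (0:ℝ) 1) := by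
  have h01 : (0:ℝ) ≤ 1 := by norm_num
  have hbase : ContinuousOn (fun x => F 0 + ∫ s in (0:ℝ)..x, Fd s) (Icc (0:ℝ) 1) := by
    apply ContinuousOn.add continuousOn_const
    have := intervalIntegral.continuousOn_primitive_interval
      (a := 0) (b := 1) (f := Fd) (μ := volume) ?_
    · simpa [uIcc_of_le h01] using this
    · rw [uIcc_of_le h01]
      exact (intervalIntegrable_iff_integrableOn_Icc_of_le h01).1 hFd
  exact ContinuousOn.congr hbase hF

lemma ibp_aux {Fd Fdd Gd G : ℝ → ℝ}
    (hFdd : IntervalIntegrable Fdd volume 0 1) (hGd : IntervalIntegrable Gd volume 0 1)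
    (hFd : ∀ x ∈ Icc (0:ℝ) 1, Fd x = Fd 0 + ∫ s in (0:ℝ)..x, Fdd s)
    (hG : ∀ x ∈ Icc (0:ℝ) 1, G x = ∫ s in (0:ℝ)..x, Gd s)
    (hG1 : G 1 = 0) :
    ∫ x in Ioc (0:ℝ) 1, Fdd x * G x = - ∫ s in Ioc (0:ℝ) 1, Fd s * Gd s := by
  have h01 : (0:ℝ) ≤ 1 := by norm_num
  have hFdd' : IntegrableOn Fdd (Ioc (0:ℝ) 1) volume :=
    (intervalIntegrable_iff_integrableOn_Ioc_of_le h01).1 hFdd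
  have hGd' : IntegrableOn Gd (Ioc (0:ℝ) 1) volume :=
    (intervalIntegrable_iff_integrableOn_Ioc_of_le h01).1 hGd
  -- continuity and boundedness of Fd on [0,1]
  have hFdcont : ContinuousOn Fd (Icc (0:ℝ) 1) := cont_of_rep hFdd hFd
  obtain ⟨CF, hCF⟩ := (isCompact_Icc (a := (0:ℝ)) (b := 1)).exists_bound_of_continuousOn hFdcont
  -- the kernel
  set K : ℝ × ℝ → ℝ := fun p => if p.2 ≤ p.1 then Fdd p.1 * Gd p.2 else 0 with hK_def
  have hKind : K = Set.indicator {p : ℝ × ℝ | p.2 ≤ p.1} (fun p => Fdd p.1 * Gd p.2) := by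
    funext p
    rw [Set.indicator_apply]
    rfl
  have hKint : Integrable K
      ((volume.restrict (Ioc (0:ℝ) 1)).prod (volume.restrict (Ioc (0:ℝ) 1))) := by
    rw [hKind]
    exact (Integrable.mul_prod hFdd' hGd').indicator
      (measurableSet_le measurable_snd measurable_fst)
  have swap :
      ∫ x in Ioc (0:ℝ) 1, ∫ s in Ioc (0:ℝ) 1, K (x, s) =
      ∫ s in Ioc (0:ℝ) 1, ∫ x in Ioc (0:ℝ) 1, K (x, s) :=
    MeasureTheory.integral_integral_swap (f := fun x s => K (x, s)) hKint
  have LHS_eq : ∫ x in Ioc (0:ℝ) 1, (∫ s in Ioc (0:ℝ) 1, K (x, s)) =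
      ∫ x in Ioc (0:ℝ) 1, Fdd x * G x := by
    apply setIntegral_congr_fun measurableSet_Ioc
    intro x hx
    show (∫ s in Ioc (0:ℝ) 1, K (x, s)) = Fdd x * G x
    have hintegrand : (fun s => K (x, s)) = fun s => Fdd x * (Iic x).indicator Gd s := by
      funext s
      by_cases h : s ≤ x <;> simp [hK_def, Set.indicator_apply, h]
    rw [hintegrand, MeasureTheory.integral_const_mul, setIntegral_indicator measurableSet_Iic]
    have hset : Ioc (0:ℝ) 1 ∩ Iic x = Ioc 0 x := by
      rw [Ioc_inter_Iic, min_eq_right hx.2]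
    rw [hset, ← intervalIntegral.integral_of_le hx.1.le, ← hG x ⟨hx.1.le, hx.2⟩]
  have RHS_eq : ∫ s in Ioc (0:ℝ) 1, (∫ x in Ioc (0:ℝ) 1, K (x, s)) =
      ∫ s in Ioc (0:ℝ) 1, Gd s * (Fd 1 - Fd s) := by
    apply setIntegral_congr_fun measurableSet_Ioc
    intro s hs
    show (∫ x in Ioc (0:ℝ) 1, K (x, s)) = Gd s * (Fd 1 - Fd s)
    have hintegrand : (fun x => K (x, s)) = fun x => Gd s * (Ici s).indicator Fdd x := by
      funext x
      by_cases h : s ≤ x <;> simp [hK_def, Set.indicator_apply, h, mul_comm]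
    rw [hintegrand, MeasureTheory.integral_const_mul, setIntegral_indicator measurableSet_Ici]
    have hset : Ioc (0:ℝ) 1 ∩ Ici s = Icc s 1 := by
      ext y
      simp only [mem_inter_iff, mem_Ioc, mem_Ici, mem_Icc]
      constructor
      · rintro ⟨⟨_, h2⟩, h3⟩; exact ⟨h3, h2⟩
      · rintro ⟨h1, h2⟩; exact ⟨⟨lt_of_lt_of_le hs.1 h1, h2⟩, h1⟩
    have hsub : IntervalIntegrable Fdd volume 0 s := by
      apply hFdd.mono_set
      rw [uIcc_of_le hs.1.le, uIcc_of_le h01]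
      exact Icc_subset_Icc_right hs.2
    have hFds : ∫ x in s..1, Fdd x = Fd 1 - Fd s := by
      rw [hFd 1 ⟨h01, le_refl 1⟩, hFd s ⟨hs.1.le, hs.2⟩]
      rw [← intervalIntegral.integral_interval_sub_left hFdd hsub]
      ring
    rw [hset, integral_Icc_eq_integral_Ioc, ← intervalIntegral.integral_of_le hs.2, hFds]
  have hFdm : AEStronglyMeasurable Fd (volume.restrict (Ioc (0:ℝ) 1)) :=
    (hFdcont.mono Ioc_subset_Icc_self).aestronglyMeasurable measurableSet_Ioc
  have int2 : Integrable (fun s => Fd s * Gd s) (volume.restrict (Ioc (0:ℝ) 1)) := by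
    refine Integrable.mono' ((hGd'.abs).const_mul CF) (hFdm.mul hGd'.aestronglyMeasurable) ?_
    refine (ae_restrict_iff' measurableSet_Ioc).2 (Eventually.of_forall fun s hs => ?_)
    rw [Real.norm_eq_abs, abs_mul]
    exact mul_le_mul_of_nonneg_right
      (by simpa [Real.norm_eq_abs] using hCF s (Ioc_subset_Icc_self hs)) (abs_nonneg _)
  have int1 : Integrable (fun s => Gd s * Fd 1) (volume.restrict (Ioc (0:ℝ) 1)) :=
    hGd'.mul_const _
  have final : ∫ s in Ioc (0:ℝ) 1, Gd s * (Fd 1 - Fd s) =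
      - ∫ s in Ioc (0:ℝ) 1, Fd s * Gd s := by
    have hsplit : (fun s => Gd s * (Fd 1 - Fd s)) =
        fun s => Gd s * Fd 1 - Fd s * Gd s := by funext s; ring
    rw [hsplit, MeasureTheory.integral_sub int1 int2, MeasureTheory.integral_mul_const]
    have hGint : ∫ s in Ioc (0:ℝ) 1, Gd s = 0 := by
      rw [← intervalIntegral.integral_of_le h01, ← hG 1 ⟨h01, le_refl 1⟩, hG1]
    rw [hGint]
    ring
  rw [LHS_eq] at swap
  rw [swap, RHS_eq, final]

lemma ibp_sym {Φ Φd Φdd Ψ Ψd Ψdd : ℝ → ℝ}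
    (hΦd : IntervalIntegrable Φd volume 0 1) (hΦdd : IntervalIntegrable Φdd volume 0 1)
    (hΨd : IntervalIntegrable Ψd volume 0 1) (hΨdd : IntervalIntegrable Ψdd volume 0 1)
    (hΦ : ∀ x ∈ Icc (0:ℝ) 1, Φ x = Φ 0 + ∫ s in (0:ℝ)..x, Φd s)
    (hΦdr : ∀ x ∈ Icc (0:ℝ) 1, Φd x = Φd 0 + ∫ s in (0:ℝ)..x, Φdd s)
    (hΨ : ∀ x ∈ Icc (0:ℝ) 1, Ψ x = Ψ 0 + ∫ s in (0:ℝ)..x, Ψd s)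
    (hΨdr : ∀ x ∈ Icc (0:ℝ) 1, Ψd x = Ψd 0 + ∫ s in (0:ℝ)..x, Ψdd s)
    (hΦ0 : Φ 0 = 0) (hΦ1 : Φ 1 = 0) (hΨ0 : Ψ 0 = 0) (hΨ1 : Ψ 1 = 0) :
    ∫ x in Ioc (0:ℝ) 1, Φdd x * Ψ x = ∫ x in Ioc (0:ℝ) 1, Φ x * Ψdd x := by
  have hΦ' : ∀ x ∈ Icc (0:ℝ) 1, Φ x = ∫ s in (0:ℝ)..x, Φd s := by
    intro x hx; rw [hΦ x hx, hΦ0, zero_add]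
  have hΨ' : ∀ x ∈ Icc (0:ℝ) 1, Ψ x = ∫ s in (0:ℝ)..x, Ψd s := by
    intro x hx; rw [hΨ x hx, hΨ0, zero_add]
  have e1 := ibp_aux hΦdd hΨd hΦdr hΨ' hΨ1
  have e2 := ibp_aux hΨdd hΦd hΨdr hΦ' hΦ1
  have comm1 : ∫ x in Ioc (0:ℝ) 1, Φ x * Ψdd x = ∫ x in Ioc (0:ℝ) 1, Ψdd x * Φ x := by
    apply setIntegral_congr_fun measurableSet_Ioc; intro x _; exact mul_comm _ _
  have comm2 : ∫ s in Ioc (0:ℝ) 1, Ψd s * Φd s = ∫ s in Ioc (0:ℝ) 1, Φd s * Ψd s := by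
    apply setIntegral_congr_fun measurableSet_Ioc; intro x _; exact mul_comm _ _
  rw [e1, comm1, e2, comm2]

lemma eigen_key {q1 q2 : ℝ → ℝ} {l m : ℝ} {f g : L2}
    (hf : IsDirichletEigenfunction q1 l f) (hg : IsDirichletEigenfunction q2 m g)
    (w : L2) (hw : (w : ℝ → ℝ) =ᵐ[mu01] fun x => (q1 x - q2 x) * (f : ℝ → ℝ) x) :
    ⟪g, w⟫ = (l - m) * ⟪g, f⟫ := by
  obtain ⟨Φ, Φd, Φdd, hfΦ, hΦd, hΦdd, hΦr, hΦdr, hΦdd2, hΦ0, hΦ1, heigf⟩ := hf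
  obtain ⟨Ψ, Ψd, Ψdd, hgΨ, hΨd, hΨdd, hΨr, hΨdr, hΨdd2, hΨ0, hΨ1, heigg⟩ := hg
  have h01 : (0:ℝ) ≤ 1 := by norm_num
  -- bounds on continuous representatives
  have hΦcont : ContinuousOn Φ (Icc (0:ℝ) 1) := cont_of_rep hΦd hΦr
  have hΨcont : ContinuousOn Ψ (Icc (0:ℝ) 1) := cont_of_rep hΨd hΨr
  obtain ⟨CΦ, hCΦ⟩ := (isCompact_Icc (a := (0:ℝ)) (b := 1)).exists_bound_of_continuousOn hΦcont
  obtain ⟨CΨ, hCΨ⟩ := (isCompact_Icc (a := (0:ℝ)) (b := 1)).exists_bound_of_continuousOn hΨcont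
  have hΦm : AEStronglyMeasurable Φ mu01 :=
    (hΦcont.mono Ioo_subset_Icc_self).aestronglyMeasurable measurableSet_Ioo
  have hΨm : AEStronglyMeasurable Ψ mu01 :=
    (hΨcont.mono Ioo_subset_Icc_self).aestronglyMeasurable measurableSet_Ioo
  have hΦdd' : IntegrableOn Φdd (Ioo (0:ℝ) 1) volume :=
    ((intervalIntegrable_iff_integrableOn_Ioc_of_le h01).1 hΦdd).mono_set Ioo_subset_Ioc_self
  have hΨdd' : IntegrableOn Ψdd (Ioo (0:ℝ) 1) volume :=
    ((intervalIntegrable_iff_integrableOn_Ioc_of_le h01).1 hΨdd).mono_set Ioo_subset_Ioc_self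
  have hbddΦ : ∀ᵐ x ∂mu01, |Φ x| ≤ CΦ := by
    refine (ae_restrict_iff' measurableSet_Ioo).2 (Eventually.of_forall fun x hx => ?_)
    simpa [Real.norm_eq_abs] using hCΦ x (Ioo_subset_Icc_self hx)
  have hbddΨ : ∀ᵐ x ∂mu01, |Ψ x| ≤ CΨ := by
    refine (ae_restrict_iff' measurableSet_Ioo).2 (Eventually.of_forall fun x hx => ?_)
    simpa [Real.norm_eq_abs] using hCΨ x (Ioo_subset_Icc_self hx)
  -- integrability of the three products
  have intΦΨ : Integrable (fun x => Ψ x * Φ x) mu01 := by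
    refine Integrable.mono' (integrable_const (CΨ * CΦ)) (hΨm.mul hΦm) ?_
    filter_upwards [hbddΦ, hbddΨ] with x h1 h2
    rw [Real.norm_eq_abs, abs_mul]
    have h0 : (0:ℝ) ≤ CΦ := le_trans (abs_nonneg _) h1
    have h0' : (0:ℝ) ≤ CΨ := le_trans (abs_nonneg _) h2
    exact mul_le_mul h2 h1 (abs_nonneg _) h0'
  have intΦddΨ : Integrable (fun x => Φdd x * Ψ x) mu01 := by
    refine Integrable.mono' (hΦdd'.abs.mul_const CΨ) (hΦdd'.aestronglyMeasurable.mul hΨm) ?_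
    filter_upwards [hbddΨ] with x h2
    rw [Real.norm_eq_abs, abs_mul]
    exact mul_le_mul_of_nonneg_left h2 (abs_nonneg _)
  have intΦΨdd : Integrable (fun x => Φ x * Ψdd x) mu01 := by
    refine Integrable.mono' ((hΨdd'.abs.const_mul CΦ)) (hΦm.mul hΨdd'.aestronglyMeasurable) ?_
    filter_upwards [hbddΦ] with x h1
    rw [Real.norm_eq_abs, abs_mul]
    exact mul_le_mul_of_nonneg_right h1 (abs_nonneg _)
  -- inner products as integrals
  have hinner_w : ⟪g, w⟫ = ∫ x, Ψ x * ((q1 x - q2 x) * Φ x) ∂mu01 := by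
    rw [MeasureTheory.L2.inner_def]
    apply integral_congr_ae
    filter_upwards [hw, hgΨ, hfΦ] with x h1 h2 h3
    rw [h1, h2, h3]
    simp [RCLike.inner_apply, conj_trivial]
    ring
  have hinner_f : ⟪g, f⟫ = ∫ x, Ψ x * Φ x ∂mu01 := by
    rw [MeasureTheory.L2.inner_def]
    apply integral_congr_ae
    filter_upwards [hgΨ, hfΦ] with x h2 h3
    rw [h2, h3]
    simp [RCLike.inner_apply, conj_trivial]
    ring
  -- pointwise algebraic identity a.e.
  have hae : ∀ᵐ x ∂mu01, Ψ x * ((q1 x - q2 x) * Φ x) =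
      (l - m) * (Ψ x * Φ x) + (Φdd x * Ψ x - Φ x * Ψdd x) := by
    filter_upwards [heigf, heigg] with x h1 h2
    have e1 : q1 x * Φ x = l * Φ x + Φdd x := by linarith
    have e2 : q2 x * Ψ x = m * Ψ x + Ψdd x := by linarith
    linear_combination Ψ x * e1 - Φ x * e2
  rw [hinner_w, integral_congr_ae hae, hinner_f]
  have hsub : Integrable (fun a => Φdd a * Ψ a - Φ a * Ψdd a) mu01 := intΦddΨ.sub intΦΨdd
  have hcm : Integrable (fun a => (l - m) * (Ψ a * Φ a)) mu01 := intΦΨ.const_mul _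
  rw [MeasureTheory.integral_add hcm hsub, MeasureTheory.integral_const_mul,
    MeasureTheory.integral_sub intΦddΨ intΦΨdd]
  have hibp : ∫ x, Φdd x * Ψ x ∂mu01 = ∫ x, Φ x * Ψdd x ∂mu01 := by
    have h1 : ∫ x, Φdd x * Ψ x ∂mu01 = ∫ x in Ioc (0:ℝ) 1, Φdd x * Ψ x := by
      rw [integral_Ioc_eq_integral_Ioo]
    have h2 : ∫ x, Φ x * Ψdd x ∂mu01 = ∫ x in Ioc (0:ℝ) 1, Φ x * Ψdd x := by
      rw [integral_Ioc_eq_integral_Ioo]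
    rw [h1, h2]
    exact ibp_sym hΦd hΦdd hΨd hΨdd hΦr hΦdr hΨr hΨdr hΦ0 hΦ1 hΨ0 hΨ1
  rw [hibp]
  ring

lemma ae_abs_le_toReal_eLpNormTop {α : Type*} {m : MeasurableSpace α} {μ : Measure α}
    {f : α → ℝ} (hf : MemLp f ⊤ μ) :
    ∀ᵐ x ∂μ, |f x| ≤ (eLpNorm f ⊤ μ).toReal := by
  have h1 := MeasureTheory.ae_le_eLpNormEssSup (f := f) (μ := μ)
  have hfin : eLpNormEssSup f μ ≠ ⊤ := by
    have := hf.2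
    rw [eLpNorm_exponent_top] at this
    exact this.ne
  filter_upwards [h1] with x hx
  have : ((‖f x‖₊ : ℝ≥0∞)).toReal ≤ (eLpNormEssSup f μ).toReal :=
    ENNReal.toReal_mono hfin hx
  simpa [eLpNorm_exponent_top, Real.norm_eq_abs] using this

lemma core_est
    {q1 q2 : ℝ → ℝ} (hq1 : MemLp q1 ⊤ mu01) (hq2 : MemLp q2 ⊤ mu01)
    (φi : L2) (ψ : HilbertBasis ℕ ℝ L2) (l : ℝ) (mu : ℕ → ℝ)
    (hl : 0 ≤ l) (hmu : ∀ m, 0 ≤ mu m)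
    (hfi : IsDirichletEigenfunction q1 l φi)
    (hψ : ∀ m, IsDirichletEigenfunction q2 (mu m) (ψ m))
    (hφnorm : ‖φi‖ = 1)
    {b bε t a₀ Q A B : ℝ} (ha₀ : 0 < a₀) (ht : 0 ≤ t)
    (hb1 : a₀ * t ≤ b) (hbε1 : a₀ * t ≤ bε)
    (hB : b ≤ B) (hbA : |b - bε| ≤ t * A) (hA : 0 ≤ A) (hQ : 0 ≤ Q)
    (haeQ : ∀ᵐ x ∂mu01, |q1 x - q2 x| ≤ Q)
    (σ : ℕ → ℝ) (hσdef : σ = fun m => Real.exp (-(mu m * bε))) (hσ : ∀ m, |σ m| ≤ 1) :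
    ‖Real.exp (-(l * b)) • φi - multL ψ σ 1 hσ φi‖ ≤ B * Q + A / a₀ := by
  have hat : 0 ≤ a₀ * t := mul_nonneg ha₀.le ht
  have hb0 : 0 ≤ b := le_trans hat hb1
  have hbε0 : 0 ≤ bε := le_trans hat hbε1
  -- the perturbation element w
  set wfun : ℝ → ℝ := fun x => (q1 x - q2 x) * (φi : ℝ → ℝ) x with hwfun_def
  have hwmeas : AEStronglyMeasurable wfun mu01 :=
    (hq1.aestronglyMeasurable.sub hq2.aestronglyMeasurable).mul (Lp.aestronglyMeasurable φi)
  have hwptle : ∀ᵐ x ∂mu01, ‖wfun x‖ ≤ ‖(Q • (φi : ℝ → ℝ)) x‖ := by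
    filter_upwards [haeQ] with x hx
    rw [hwfun_def]
    simp only [Pi.smul_apply, smul_eq_mul, Real.norm_eq_abs, abs_mul, abs_of_nonneg hQ]
    exact mul_le_mul_of_nonneg_right hx (abs_nonneg _)
  have hwsnorm : eLpNorm wfun 2 mu01 ≤ eLpNorm (Q • (φi : ℝ → ℝ)) 2 mu01 :=
    eLpNorm_mono_ae hwptle
  have hQsnorm : eLpNorm (Q • (φi : ℝ → ℝ)) 2 mu01 = (‖Q‖₊ : ℝ≥0∞) * eLpNorm (φi : ℝ → ℝ) 2 mu01 :=
    eLpNorm_const_smul Q _ 2 mu01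
  have hwmem : MemLp wfun 2 mu01 := by
    refine ⟨hwmeas, lt_of_le_of_lt (le_trans hwsnorm hQsnorm.le) ?_⟩
    exact ENNReal.mul_lt_top ENNReal.coe_lt_top (Lp.eLpNorm_lt_top φi)
  set w : L2 := hwmem.toLp wfun with hw_def
  have hwcoe : (w : ℝ → ℝ) =ᵐ[mu01] wfun := hwmem.coeFn_toLp
  have hwnorm : ‖w‖ ≤ Q := by
    rw [hw_def, Lp.norm_toLp]
    have h1 : (eLpNorm wfun 2 mu01).toReal ≤
        ((‖Q‖₊ : ℝ≥0∞) * eLpNorm (φi : ℝ → ℝ) 2 mu01).toReal := by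
      apply ENNReal.toReal_mono
      · exact (ENNReal.mul_lt_top ENNReal.coe_lt_top (Lp.eLpNorm_lt_top φi)).ne
      · exact hwsnorm.trans hQsnorm.le
    refine h1.trans ?_
    rw [ENNReal.toReal_mul]
    have h0 : ((‖Q‖₊ : ℝ≥0∞)).toReal = Q := by
      simp [Real.norm_eq_abs, abs_of_nonneg hQ]
    have h2 : (eLpNorm (φi : ℝ → ℝ) 2 mu01).toReal = ‖φi‖ := (Lp.norm_def φi).symm
    rw [h0, h2, hφnorm, mul_one]
  have hDcoord : ∀ m, ψ.repr w m = (l - mu m) * ψ.repr (φi) m := by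
    intro m
    rw [ψ.repr_apply_apply, ψ.repr_apply_apply]
    exact eigen_key hfi (hψ m) w hwcoe
  set P := ψ.repr φi with hP_def
  have hPnorm : ‖P‖ = 1 := by rw [hP_def, ψ.repr.norm_map, hφnorm]
  have htgt : ‖Real.exp (-(l * b)) • φi - multL ψ σ 1 hσ φi‖ =
      ‖ψ.repr (Real.exp (-(l * b)) • φi - multL ψ σ 1 hσ φi)‖ := (ψ.repr.norm_map _).symm
  set X := ψ.repr (Real.exp (-(l * b)) • φi - multL ψ σ 1 hσ φi) with hX_def
  have hXcoord : ∀ m, X m = (Real.exp (-(l * b)) - σ m) * P m := by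
    intro m
    rw [hX_def, map_sub, lp.coeFn_sub, Pi.sub_apply, _root_.map_smul, lp.coeFn_smul,
      Pi.smul_apply, smul_eq_mul, multL_repr, ← hP_def]
    ring
  have key1 : ∀ m, |Real.exp (-(l * b)) - Real.exp (-(mu m * b))| ≤ b * |l - mu m| := by
    intro m
    have h := exp_sub_exp_abs (mul_nonneg hl hb0) (mul_nonneg (hmu m) hb0)
    refine h.trans (le_of_eq ?_)
    rw [← sub_mul, abs_mul, abs_of_nonneg hb0]
    ring
  have key2 : ∀ m, |Real.exp (-(mu m * b)) - σ m| ≤ A / a₀ := by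
    intro m
    rw [hσdef]
    calc |Real.exp (-(mu m * b)) - Real.exp (-(mu m * bε))|
        ≤ mu m * Real.exp (-(mu m * (a₀ * t))) * |b - bε| :=
          exp_sub_exp_scaled (hmu m) hat hb1 hbε1
      _ ≤ mu m * Real.exp (-(mu m * (a₀ * t))) * (t * A) := by
          exact mul_le_mul_of_nonneg_left hbA
            (mul_nonneg (hmu m) (Real.exp_pos _).le)
      _ = (mu m * (a₀ * t) * Real.exp (-(mu m * (a₀ * t)))) * (A / a₀) := by
          field_simp
      _ ≤ 1 * (A / a₀) := by
          exact mul_le_mul_of_nonneg_right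
            (self_mul_exp_neg_le_one (mul_nonneg (hmu m) hat))
            (div_nonneg hA ha₀.le)
      _ = A / a₀ := one_mul _
  have hmemG1 : Memℓp (fun m => (Real.exp (-(l * b)) - Real.exp (-(mu m * b))) * P m) 2 := by
    refine memℓp_two_of_le_mul (C := b) (lp.memℓp (ψ.repr w)) (fun m => ?_)
    rw [abs_mul, hDcoord m, abs_mul, ← mul_assoc]
    exact mul_le_mul_of_nonneg_right (key1 m) (abs_nonneg _)
  have hmemG2 : Memℓp (fun m => (Real.exp (-(mu m * b)) - σ m) * P m) 2 := by
    refine memℓp_two_of_le_mul (C := A / a₀) (lp.memℓp P) (fun m => ?_)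
    rw [abs_mul]
    exact mul_le_mul_of_nonneg_right (key2 m) (abs_nonneg _)
  set G1 : lp (fun _ : ℕ => ℝ) 2 :=
    ⟨fun m => (Real.exp (-(l * b)) - Real.exp (-(mu m * b))) * P m, hmemG1⟩ with hG1_def
  set G2 : lp (fun _ : ℕ => ℝ) 2 :=
    ⟨fun m => (Real.exp (-(mu m * b)) - σ m) * P m, hmemG2⟩ with hG2_def
  have hsplit : X = G1 + G2 := by
    apply lp.ext
    funext m
    rw [lp.coeFn_add, Pi.add_apply, hXcoord m]
    show (Real.exp (-(l * b)) - σ m) * P m =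
      (Real.exp (-(l * b)) - Real.exp (-(mu m * b))) * P m +
      (Real.exp (-(mu m * b)) - σ m) * P m
    ring
  have hG1norm : ‖G1‖ ≤ B * Q := by
    have h1 : ‖G1‖ ≤ ‖b • ψ.repr w‖ := by
      apply lp_norm_mono
      intro m
      rw [lp.coeFn_smul, Pi.smul_apply, smul_eq_mul]
      show |(Real.exp (-(l * b)) - Real.exp (-(mu m * b))) * P m| ≤ |b * ψ.repr w m|
      rw [abs_mul, hDcoord m, abs_mul, abs_mul, abs_of_nonneg hb0, ← mul_assoc]
      exact mul_le_mul_of_nonneg_right (key1 m) (abs_nonneg _)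
    refine h1.trans ?_
    rw [norm_smul, Real.norm_eq_abs, abs_of_nonneg hb0, ψ.repr.norm_map]
    calc b * ‖w‖ ≤ b * Q := mul_le_mul_of_nonneg_left hwnorm hb0
      _ ≤ B * Q := mul_le_mul_of_nonneg_right hB hQ
  have hG2norm : ‖G2‖ ≤ A / a₀ := by
    have h1 : ‖G2‖ ≤ ‖(A / a₀) • P‖ := by
      apply lp_norm_mono
      intro m
      rw [lp.coeFn_smul, Pi.smul_apply, smul_eq_mul]
      show |(Real.exp (-(mu m * b)) - σ m) * P m| ≤ |(A / a₀) * P m|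
      rw [abs_mul, abs_mul, abs_of_nonneg (div_nonneg hA ha₀.le)]
      exact mul_le_mul_of_nonneg_right (key2 m) (abs_nonneg _)
    refine h1.trans ?_
    rw [norm_smul, Real.norm_eq_abs, abs_of_nonneg (div_nonneg hA ha₀.le), hPnorm, mul_one]
  calc ‖Real.exp (-(l * b)) • φi - multL ψ σ 1 hσ φi‖ = ‖X‖ := htgt
    _ = ‖G1 + G2‖ := by rw [hsplit]
    _ ≤ ‖G1‖ + ‖G2‖ := norm_add_le _ _
    _ ≤ B * Q + A / a₀ := add_le_add hG1norm hG2norm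

/-- consistency of very weak solutions with classical ones:
`sup_{t∈[0,T]} ‖u(t) − u_ε(t)‖_{L²(0,1)} → 0` as `ε → 0`. -/
theorem stmt13
    (T a₀ : ℝ) (hT : 0 < T) (ha₀ : 0 < a₀)
    (q : ℝ → ℝ) (hq : MemLp q ⊤ mu01)
    (a : ℝ → ℝ) (haBdd : MemLp a ⊤ (volume.restrict (Icc (0:ℝ) T)))
    (ha : ∀ᵐ t ∂(volume.restrict (Icc (0:ℝ) T)), a₀ ≤ a t)
    (u₀ : L2) (U Ud Udd : ℝ → ℝ) (hu₀ : IsH2DirichletWith u₀ U Ud Udd)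
    (qe : ℝ → ℝ → ℝ) (hqe : ∀ ε ∈ Ioc (0:ℝ) 1, MemLp (qe ε) ⊤ mu01)
    (ae : ℝ → ℝ → ℝ)
    (haeBdd : ∀ ε ∈ Ioc (0:ℝ) 1, MemLp (ae ε) ⊤ (volume.restrict (Icc (0:ℝ) T)))
    (hae : ∀ ε ∈ Ioc (0:ℝ) 1, ∀ᵐ t ∂(volume.restrict (Icc (0:ℝ) T)), a₀ ≤ ae ε t)
    (u0e : ℝ → L2)
    (hqconv : Tendsto (fun ε => (eLpNorm (fun x => qe ε x - q x) ⊤ mu01).toReal)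
      (nhdsWithin 0 (Ioc (0:ℝ) 1)) (nhds 0))
    (haconv : Tendsto
      (fun ε => (eLpNorm (fun t => ae ε t - a t) ⊤ (volume.restrict (Icc (0:ℝ) T))).toReal)
      (nhdsWithin 0 (Ioc (0:ℝ) 1)) (nhds 0))
    (hu0conv : Tendsto (fun ε => ‖u0e ε - u₀‖) (nhdsWithin 0 (Ioc (0:ℝ) 1)) (nhds 0))
    (φ : HilbertBasis ℕ ℝ L2) (lam : ℕ → ℝ) (hlam : ∀ n, 0 ≤ lam n)
    (hφ : ∀ n, IsDirichletEigenfunction q (lam n) (φ n))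
    (Φb : ℝ → HilbertBasis ℕ ℝ L2) (lame : ℝ → ℕ → ℝ)
    (hlame : ∀ ε ∈ Ioc (0:ℝ) 1, ∀ n, 0 ≤ lame ε n)
    (hΦb : ∀ ε ∈ Ioc (0:ℝ) 1, ∀ n,
      IsDirichletEigenfunction (qe ε) (lame ε n) (Φb ε n)) :
    Tendsto (fun ε =>
      ⨆ t : Icc (0:ℝ) T,
        ‖(∑' n, (Real.exp (-(lam n) * ∫ τ in (0:ℝ)..(t:ℝ), a τ) * ⟪u₀, φ n⟫) • φ n) -
          (∑' n, (Real.exp (-(lame ε n) * ∫ τ in (0:ℝ)..(t:ℝ), ae ε τ) *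
              ⟪u0e ε, Φb ε n⟫) • Φb ε n)‖)
      (nhdsWithin 0 (Ioc (0:ℝ) 1)) (nhds 0) := by
  haveI hfinT : IsFiniteMeasure (volume.restrict (Icc (0:ℝ) T)) :=
    ⟨by rw [Measure.restrict_apply_univ]; exact measure_Icc_lt_top⟩
  set Na : ℝ := (eLpNorm a ⊤ (volume.restrict (Icc (0:ℝ) T))).toReal with hNa_def
  have hNa0 : 0 ≤ Na := ENNReal.toReal_nonneg
  have haAe : ∀ᵐ s ∂(volume.restrict (Icc (0:ℝ) T)), |a s| ≤ Na :=
    ae_abs_le_toReal_eLpNormTop haBdd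
  have haInt : IntegrableOn a (Icc (0:ℝ) T) volume := haBdd.integrable le_top
  rw [Metric.tendsto_nhds]
  intro δ hδ
  have hpartial : Tendsto (fun N => ∑ n ∈ Finset.range N, φ.repr u₀ n • φ n) atTop (nhds u₀) :=
    (φ.hasSum_repr u₀).tendsto_sum_nat
  have hdist : Tendsto (fun N => ‖u₀ - ∑ n ∈ Finset.range N, φ.repr u₀ n • φ n‖)
      atTop (nhds 0) := by
    have h := (tendsto_const_nhds (x := u₀) (f := atTop)).sub hpartial
    rw [sub_self] at h
    simpa using h.norm
  obtain ⟨N, hN⟩ := (hdist.eventually_lt_const (by linarith : (0:ℝ) < δ/8)).exists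
  set u0N : L2 := ∑ n ∈ Finset.range N, φ.repr u₀ n • φ n with hu0N_def
  set dN : ℝ := ‖u₀ - u0N‖ with hdN_def
  have hdN : dN < δ / 8 := hN
  have hdN0 : 0 ≤ dN := norm_nonneg _
  set K : ℝ := ∑ n ∈ Finset.range N, |φ.repr u₀ n| with hK_def
  have hK0 : 0 ≤ K := Finset.sum_nonneg fun n _ => abs_nonneg _
  set Qf : ℝ → ℝ := fun ε => (eLpNorm (fun x => qe ε x - q x) ⊤ mu01).toReal with hQf_def
  set Af : ℝ → ℝ :=
    fun ε => (eLpNorm (fun s => ae ε s - a s) ⊤ (volume.restrict (Icc (0:ℝ) T))).toReal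
    with hAf_def
  have hQf0 : ∀ ε, 0 ≤ Qf ε := fun ε => ENNReal.toReal_nonneg
  have hAf0 : ∀ ε, 0 ≤ Af ε := fun ε => ENNReal.toReal_nonneg
  set bound : ℝ → ℝ :=
    fun ε => 2 * dN + (‖u0e ε - u₀‖ + K * (Na * T * Qf ε + Af ε / a₀)) with hbound_def
  have hbtend : Tendsto bound (nhdsWithin 0 (Ioc (0:ℝ) 1))
      (nhds (2 * dN + (0 + K * (Na * T * 0 + 0 / a₀)))) := by
    rw [hbound_def]
    apply Tendsto.const_add
    exact hu0conv.add (Tendsto.const_mul K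
      ((hqconv.const_mul (Na * T)).add (haconv.div_const a₀)))
  have hlim_eq : 2 * dN + (0 + K * (Na * T * 0 + 0 / a₀)) = 2 * dN := by ring
  rw [hlim_eq] at hbtend
  have hev1 := hbtend.eventually_lt_const (show 2 * dN < δ by linarith)
  filter_upwards [hev1, eventually_mem_nhdsWithin] with ε hltδ hε
  have hbound0 : 0 ≤ bound ε := by
    have h1 : 0 ≤ Na * T * Qf ε := mul_nonneg (mul_nonneg hNa0 hT.le) (hQf0 ε)
    have h2 : 0 ≤ Af ε / a₀ := div_nonneg (hAf0 ε) ha₀.le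
    have h3 : 0 ≤ K * (Na * T * Qf ε + Af ε / a₀) := mul_nonneg hK0 (by linarith)
    have h4 : 0 ≤ ‖u0e ε - u₀‖ := norm_nonneg _
    rw [hbound_def]
    dsimp only
    linarith
  have haeAe : ∀ᵐ s ∂(volume.restrict (Icc (0:ℝ) T)), |ae ε s - a s| ≤ Af ε := by
    have h0 : MemLp (fun s => ae ε s - a s) ⊤ (volume.restrict (Icc (0:ℝ) T)) :=
      (haeBdd ε hε).sub haBdd
    rw [hAf_def]
    exact ae_abs_le_toReal_eLpNormTop h0
  have haeInt : IntegrableOn (ae ε) (Icc (0:ℝ) T) volume := (haeBdd ε hε).integrable le_top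
  have haea : ∀ᵐ s ∂(volume.restrict (Icc (0:ℝ) T)), a₀ ≤ ae ε s := hae ε hε
  have haeQ : ∀ᵐ x ∂mu01, |q x - qe ε x| ≤ Qf ε := by
    have h0 : MemLp (fun x => qe ε x - q x) ⊤ mu01 := (hqe ε hε).sub hq
    have h := ae_abs_le_toReal_eLpNormTop h0
    rw [hQf_def]
    filter_upwards [h] with x hx2
    rw [abs_sub_comm]
    exact hx2
  rw [Real.dist_eq, sub_zero, abs_of_nonneg (Real.iSup_nonneg fun tt => norm_nonneg _)]
  refine lt_of_le_of_lt (Real.iSup_le (fun tt => ?_) hbound0) hltδ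
  set t : ℝ := (tt : ℝ) with ht_def
  have ht0 : 0 ≤ t := tt.2.1
  have htT : t ≤ T := tt.2.2
  set bt : ℝ := ∫ τ in (0:ℝ)..t, a τ with hbt_def
  set bεt : ℝ := ∫ τ in (0:ℝ)..t, ae ε τ with hbεt_def
  have haIntt : IntervalIntegrable a volume 0 t := by
    apply IntegrableOn.intervalIntegrable
    rw [uIcc_of_le ht0]
    exact haInt.mono_set (Icc_subset_Icc_right htT)
  have haeIntt : IntervalIntegrable (ae ε) volume 0 t := by
    apply IntegrableOn.intervalIntegrable
    rw [uIcc_of_le ht0]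
    exact haeInt.mono_set (Icc_subset_Icc_right htT)
  have hbt_lower : a₀ * t ≤ bt := by
    have h1 : ∫ τ in (0:ℝ)..t, (a₀ : ℝ) ≤ ∫ τ in (0:ℝ)..t, a τ := by
      apply intervalIntegral.integral_mono_ae_restrict ht0 intervalIntegrable_const haIntt
      exact ae_restrict_of_ae_restrict_of_subset (Icc_subset_Icc_right htT) ha
    rw [hbt_def]
    refine le_trans (le_of_eq ?_) h1
    rw [intervalIntegral.integral_const, smul_eq_mul, sub_zero, mul_comm]
  have hbεt_lower : a₀ * t ≤ bεt := by
    have h1 : ∫ τ in (0:ℝ)..t, (a₀ : ℝ) ≤ ∫ τ in (0:ℝ)..t, ae ε τ := by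
      apply intervalIntegral.integral_mono_ae_restrict ht0 intervalIntegrable_const haeIntt
      exact ae_restrict_of_ae_restrict_of_subset (Icc_subset_Icc_right htT) haea
    rw [hbεt_def]
    refine le_trans (le_of_eq ?_) h1
    rw [intervalIntegral.integral_const, smul_eq_mul, sub_zero, mul_comm]
  have hbt_upper : bt ≤ Na * T := by
    have h1 : ∫ τ in (0:ℝ)..t, a τ ≤ ∫ τ in (0:ℝ)..t, (Na : ℝ) := by
      apply intervalIntegral.integral_mono_ae_restrict ht0 haIntt intervalIntegrable_const
      refine (ae_restrict_of_ae_restrict_of_subset (Icc_subset_Icc_right htT) haAe).mono ?_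
      intro s hs
      exact le_trans (le_abs_self _) hs
    rw [hbt_def]
    refine le_trans h1 ?_
    rw [intervalIntegral.integral_const, smul_eq_mul, sub_zero]
    calc t * Na ≤ T * Na := mul_le_mul_of_nonneg_right htT hNa0
      _ = Na * T := mul_comm _ _
  have hdiffb : |bt - bεt| ≤ t * Af ε := by
    have hsub : bt - bεt = ∫ τ in (0:ℝ)..t, (a τ - ae ε τ) :=
      (intervalIntegral.integral_sub haIntt haeIntt).symm
    rw [hsub]
    calc |∫ τ in (0:ℝ)..t, (a τ - ae ε τ)| ≤ ∫ τ in (0:ℝ)..t, |a τ - ae ε τ| :=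
          intervalIntegral.abs_integral_le_integral_abs ht0
      _ ≤ ∫ τ in (0:ℝ)..t, Af ε := by
          apply intervalIntegral.integral_mono_ae_restrict ht0
            (haIntt.sub haeIntt).abs intervalIntegrable_const
          refine (ae_restrict_of_ae_restrict_of_subset (Icc_subset_Icc_right htT) haeAe).mono ?_
          intro s hs
          show |a s - ae ε s| ≤ Af ε
          rw [abs_sub_comm]
          exact hs
      _ = t * Af ε := by rw [intervalIntegral.integral_const, smul_eq_mul, sub_zero]
  have hσ1 : ∀ n, |Real.exp (-(lam n) * bt)| ≤ 1 := by
    intro n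
    rw [abs_of_pos (Real.exp_pos _)]
    apply Real.exp_le_one_iff.2
    have h0 : 0 ≤ lam n * bt :=
      mul_nonneg (hlam n) (le_trans (mul_nonneg ha₀.le ht0) hbt_lower)
    rw [neg_mul]
    linarith
  have hσ2 : ∀ n, |Real.exp (-(lame ε n) * bεt)| ≤ 1 := by
    intro n
    rw [abs_of_pos (Real.exp_pos _)]
    apply Real.exp_le_one_iff.2
    have h0 : 0 ≤ lame ε n * bεt :=
      mul_nonneg (hlame ε hε n) (le_trans (mul_nonneg ha₀.le ht0) hbεt_lower)
    rw [neg_mul]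
    linarith
  have hu_eq : (∑' n, (Real.exp (-(lam n) * bt) * ⟪u₀, φ n⟫) • φ n)
      = multL φ (fun n => Real.exp (-(lam n) * bt)) 1 hσ1 u₀ :=
    multL_tsum φ _ 1 hσ1 u₀
  have hv_eq : (∑' n, (Real.exp (-(lame ε n) * bεt) * ⟪u0e ε, Φb ε n⟫) • Φb ε n)
      = multL (Φb ε) (fun m => Real.exp (-(lame ε m) * bεt)) 1 hσ2 (u0e ε) :=
    multL_tsum _ _ 1 hσ2 _
  rw [hu_eq, hv_eq]
  set M1 := multL φ (fun n => Real.exp (-(lam n) * bt)) 1 hσ1 with hM1_def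
  set M2 := multL (Φb ε) (fun m => Real.exp (-(lame ε m) * bεt)) 1 hσ2 with hM2_def
  have hcore : ∀ n, ‖Real.exp (-(lam n) * bt) • φ n - M2 (φ n)‖ ≤
      Na * T * Qf ε + Af ε / a₀ := by
    intro n
    have hx : Real.exp (-(lam n) * bt) = Real.exp (-(lam n * bt)) := by rw [neg_mul]
    rw [hx, hM2_def]
    refine core_est hq (hqe ε hε) (φ n) (Φb ε) (lam n) (lame ε) (hlam n)
      (fun m => hlame ε hε m) (hφ n) (fun m => hΦb ε hε m) (φ.orthonormal.1 n)
      ha₀ ht0 hbt_lower hbεt_lower hbt_upper hdiffb (hAf0 ε) (hQf0 ε) haeQ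
      (fun m => Real.exp (-(lame ε m) * bεt)) ?_ hσ2
    funext m
    rw [neg_mul]
  have hdecomp : M1 u₀ - M2 (u0e ε) = M1 (u₀ - u0N) +
      (∑ n ∈ Finset.range N,
        φ.repr u₀ n • (Real.exp (-(lam n) * bt) • φ n - M2 (φ n))) +
      M2 (u0N - u0e ε) := by
    have e1 : M1 (u₀ - u0N) = M1 u₀ - M1 u0N := map_sub _ _ _
    have e3 : M2 (u0N - u0e ε) = M2 u0N - M2 (u0e ε) := map_sub _ _ _
    have eM1 : M1 u0N = ∑ n ∈ Finset.range N,
        φ.repr u₀ n • (Real.exp (-(lam n) * bt) • φ n) := by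
      rw [hu0N_def, hM1_def, map_sum]
      refine Finset.sum_congr rfl (fun n _ => ?_)
      rw [_root_.map_smul, multL_basis]
    have eM2 : M2 u0N = ∑ n ∈ Finset.range N, φ.repr u₀ n • M2 (φ n) := by
      rw [hu0N_def, hM2_def, map_sum]
      exact Finset.sum_congr rfl (fun n _ => _root_.map_smul _ _ _)
    have e2 : ∑ n ∈ Finset.range N,
        φ.repr u₀ n • (Real.exp (-(lam n) * bt) • φ n - M2 (φ n)) = M1 u0N - M2 u0N := by
      rw [eM1, eM2, ← Finset.sum_sub_distrib]
      exact Finset.sum_congr rfl (fun n _ => smul_sub _ _ _)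
    rw [e1, e2, e3]
    abel
  rw [hdecomp]
  have hA : ‖M1 (u₀ - u0N)‖ ≤ dN := by
    rw [hM1_def]
    have := multL_norm φ (fun n => Real.exp (-(lam n) * bt)) 1 hσ1 zero_le_one (u₀ - u0N)
    rw [one_mul] at this
    rw [hdN_def]
    exact this
  have hC : ‖M2 (u0N - u0e ε)‖ ≤ dN + ‖u0e ε - u₀‖ := by
    have h1 : ‖M2 (u0N - u0e ε)‖ ≤ 1 * ‖u0N - u0e ε‖ := by
      rw [hM2_def]
      exact multL_norm _ _ 1 hσ2 zero_le_one _
    rw [one_mul] at h1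
    refine h1.trans ?_
    calc ‖u0N - u0e ε‖ = ‖(u0N - u₀) + (u₀ - u0e ε)‖ := by rw [sub_add_sub_cancel]
      _ ≤ ‖u0N - u₀‖ + ‖u₀ - u0e ε‖ := norm_add_le _ _
      _ = dN + ‖u0e ε - u₀‖ := by rw [hdN_def, norm_sub_rev u0N u₀, norm_sub_rev u₀ (u0e ε)]
  have hB : ‖∑ n ∈ Finset.range N,
      φ.repr u₀ n • (Real.exp (-(lam n) * bt) • φ n - M2 (φ n))‖ ≤
      K * (Na * T * Qf ε + Af ε / a₀) := by
    calc ‖∑ n ∈ Finset.range N,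
        φ.repr u₀ n • (Real.exp (-(lam n) * bt) • φ n - M2 (φ n))‖
        ≤ ∑ n ∈ Finset.range N,
          ‖φ.repr u₀ n • (Real.exp (-(lam n) * bt) • φ n - M2 (φ n))‖ :=
          norm_sum_le _ _
      _ = ∑ n ∈ Finset.range N,
          |φ.repr u₀ n| * ‖Real.exp (-(lam n) * bt) • φ n - M2 (φ n)‖ := by
          refine Finset.sum_congr rfl (fun n _ => ?_)
          rw [norm_smul, Real.norm_eq_abs]
      _ ≤ ∑ n ∈ Finset.range N, |φ.repr u₀ n| * (Na * T * Qf ε + Af ε / a₀) :=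
          Finset.sum_le_sum (fun n _ =>
            mul_le_mul_of_nonneg_left (hcore n) (abs_nonneg _))
      _ = K * (Na * T * Qf ε + Af ε / a₀) := by rw [hK_def, ← Finset.sum_mul]
  calc ‖M1 (u₀ - u0N) +
      (∑ n ∈ Finset.range N,
        φ.repr u₀ n • (Real.exp (-(lam n) * bt) • φ n - M2 (φ n))) +
      M2 (u0N - u0e ε)‖
      ≤ ‖M1 (u₀ - u0N) +
        (∑ n ∈ Finset.range N,
          φ.repr u₀ n • (Real.exp (-(lam n) * bt) • φ n - M2 (φ n)))‖ +
        ‖M2 (u0N - u0e ε)‖ := norm_add_le _ _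
    _ ≤ ‖M1 (u₀ - u0N)‖ +
        ‖∑ n ∈ Finset.range N,
          φ.repr u₀ n • (Real.exp (-(lam n) * bt) • φ n - M2 (φ n))‖ +
        ‖M2 (u0N - u0e ε)‖ := by
          have := norm_add_le (M1 (u₀ - u0N))
            (∑ n ∈ Finset.range N,
              φ.repr u₀ n • (Real.exp (-(lam n) * bt) • φ n - M2 (φ n)))
          linarith
    _ ≤ dN + K * (Na * T * Qf ε + Af ε / a₀) + (dN + ‖u0e ε - u₀‖) :=
          add_le_add (add_le_add hA hB) hC
    _ ≤ bound ε := by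
          rw [hbound_def]
          dsimp only
          linarith


end
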